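/- arXiv:1707.07436 — 2 statements merged into one kernel-verified Lean document; each statement's English description precedes it below -/
import Mathlib

section
/- Let T be an edge-weighted tree with positive real edge weights, and let u, v, w be three leaves of T such that the path from u to v is the (weightwise) largest among the three paths in the subtree induced by u, v, w. Then for any other leaf x of T, d_T(w,x) ≤ max{d_T(u,x), d_T(v,x)}, where d_T denotes the weighted path distance in T. -/
open SimpleGraph

/-- A tree with positive real edge weights. -/
structure WTree (α : Type) where
  g : SimpleGraph α
  isTree : g.IsTree
  w : α → α → ℝ
  w_symm : ∀ a b, w a b = w b a
  w_pos : ∀ a b, g.Adj a b → 0 < w a b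

/-- The weighted distance between two vertices of a weighted tree: the sum of
the weights of the edges on the unique path between them. -/
noncomputable def WTree.dist {α : Type} (T : WTree α) (u v : α) : ℝ :=
  (((T.isTree.existsUnique_path u v).exists.choose).darts.map
    (fun d => T.w d.toProd.1 d.toProd.2)).sum

/-- A vertex of a weighted tree is a leaf if it has exactly one neighbor. -/
def WTree.IsLeaf {α : Type} (T : WTree α) (v : α) : Prop :=
  ∃! u, T.g.Adj v u

/-- `G = PCG(T, dmin, dmax)` via the leaf-assignment `f`. -/
def IsPCGWith {V β : Type} (G : SimpleGraph V) (T : WTree β) (f : V → β)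
    (dmin dmax : ℝ) : Prop :=
  Function.Injective f ∧ (∀ v, T.IsLeaf (f v)) ∧ (∀ b, T.IsLeaf b → ∃ v, f v = b) ∧
    ∀ u v : V, u ≠ v →
      (G.Adj u v ↔ dmin ≤ T.dist (f u) (f v) ∧ T.dist (f u) (f v) ≤ dmax)

/-- A graph is a pairwise compatibility graph. -/
def IsPCG {V : Type} (G : SimpleGraph V) : Prop :=
  ∃ (β : Type) (T : WTree β) (f : V → β) (dmin dmax : ℝ),
    0 ≤ dmin ∧ dmin ≤ dmax ∧ IsPCGWith G T f dmin dmax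

namespace WTree

variable {α : Type} (T : WTree α)

/-- The weight of a walk. -/
noncomputable def wsum {a b : α} (p : T.g.Walk a b) : ℝ :=
  (p.darts.map fun d => T.w d.toProd.1 d.toProd.2).sum

lemma wsum_nonneg {a b : α} (p : T.g.Walk a b) : 0 ≤ T.wsum p := by
  apply List.sum_nonneg
  intro r hr
  simp only [List.mem_map] at hr
  obtain ⟨d, _, rfl⟩ := hr
  exact (T.w_pos _ _ d.adj).le

lemma dist_eq {a b : α} {p : T.g.Walk a b} (hp : p.IsPath) : T.dist a b = T.wsum p := by
  have h := (T.isTree.existsUnique_path a b).exists.choose_spec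
  have he := (T.isTree.existsUnique_path a b).unique h hp
  unfold WTree.dist wsum
  rw [he]

lemma dist_nonneg'' (a b : α) : 0 ≤ T.dist a b := by
  have h := (T.isTree.existsUnique_path a b).exists.choose_spec
  rw [T.dist_eq h]
  exact T.wsum_nonneg _

lemma wsum_append {a b c : α} (p : T.g.Walk a b) (q : T.g.Walk b c) :
    T.wsum (p.append q) = T.wsum p + T.wsum q := by
  unfold wsum
  rw [Walk.darts_append, List.map_append, List.sum_append]

lemma wsum_reverse {a b : α} (p : T.g.Walk a b) : T.wsum p.reverse = T.wsum p := by
  unfold wsum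
  rw [Walk.darts_reverse, List.map_reverse, List.sum_reverse, List.map_map]
  congr 1
  refine List.map_congr_left fun d _ => ?_
  rcases d with ⟨⟨x, y⟩, h⟩
  exact T.w_symm y x

lemma dist_comm (a b : α) : T.dist a b = T.dist b a := by
  have h := (T.isTree.existsUnique_path a b).exists.choose_spec
  rw [T.dist_eq h, T.dist_eq h.reverse, wsum_reverse]

lemma dist_split {a b : α} {p : T.g.Walk a b} (hp : p.IsPath) {m : α} (hm : m ∈ p.support) :
    T.dist a b = T.dist a m + T.dist m b := by
  classical
  rw [T.dist_eq hp, T.dist_eq (hp.takeUntil hm), T.dist_eq (hp.dropUntil hm),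
    ← T.wsum_append, Walk.take_spec p hm]

lemma meet {b a c : α} (p : T.g.Walk b a) (q : T.g.Walk a c) (hp : p.IsPath) (hq : q.IsPath) :
    ∃ (m : α) (r : T.g.Walk b c), r.IsPath ∧ m ∈ p.support ∧ m ∈ q.support ∧ m ∈ r.support ∧
      (∀ y ∈ r.support, y ∈ p.support ∨ y ∈ q.support) := by
  classical
  induction p with
  | nil =>
    exact ⟨_, q, hq, Walk.start_mem_support _, q.start_mem_support, q.start_mem_support,
      fun y hy => Or.inr hy⟩
  | @cons b b' a h p' ih =>
    rw [Walk.cons_isPath_iff] at hp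
    by_cases hb : b ∈ q.support
    · exact ⟨b, q.dropUntil b hb, hq.dropUntil hb, Walk.start_mem_support _, hb,
        Walk.start_mem_support _, fun y hy => Or.inr (Walk.support_dropUntil_subset q hb hy)⟩
    · obtain ⟨m, r, hr, hm1, hm2, hm3, hsub⟩ := ih q hp.1 hq
      have hbr : b ∉ r.support := by
        intro hyr
        rcases hsub b hyr with h1 | h1
        · exact hp.2 h1
        · exact hb h1
      refine ⟨m, Walk.cons h r, hr.cons hbr, ?_, hm2, ?_, ?_⟩
      · rw [Walk.support_cons]
        exact List.mem_cons_of_mem _ hm1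
      · rw [Walk.support_cons]
        exact List.mem_cons_of_mem _ hm3
      · intro y hy
        rw [Walk.support_cons, List.mem_cons] at hy
        rcases hy with rfl | hy
        · exact Or.inl (Walk.start_mem_support _)
        · rcases hsub y hy with h1 | h1
          · exact Or.inl (by rw [Walk.support_cons]; exact List.mem_cons_of_mem _ h1)
          · exact Or.inr h1

lemma median {u v : α} (p : T.g.Walk u v) (hp : p.IsPath) (c : α) :
    ∃ m, m ∈ p.support ∧ T.dist u v = T.dist u m + T.dist m v ∧
      T.dist u c = T.dist u m + T.dist m c ∧ T.dist v c = T.dist v m + T.dist m c := by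
  obtain ⟨q, hq⟩ := (T.isTree.existsUnique_path u c).exists
  obtain ⟨m, r, hr, hm1, hm2, hm3, -⟩ := T.meet p.reverse q hp.reverse hq
  rw [Walk.support_reverse, List.mem_reverse] at hm1
  exact ⟨m, hm1, T.dist_split hp hm1, T.dist_split hq hm2,
    T.dist_split hr hm3⟩

lemma dist_triangle (a b c : α) : T.dist a c ≤ T.dist a b + T.dist b c := by
  obtain ⟨p, hp⟩ := (T.isTree.existsUnique_path a b).exists
  obtain ⟨m, _, h1, h2, h3⟩ := T.median p hp c
  have n1 := T.dist_nonneg'' m b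
  have n2 := T.dist_nonneg'' b m
  rw [h1, h2, h3]
  linarith

lemma between {u v m1 m2 : α} (p : T.g.Walk u v) (hp : p.IsPath)
    (h1 : m1 ∈ p.support) (h2 : m2 ∈ p.support) :
    (T.dist u m2 = T.dist u m1 + T.dist m1 m2 ∧ T.dist m1 v = T.dist m1 m2 + T.dist m2 v) ∨
    (T.dist u m1 = T.dist u m2 + T.dist m2 m1 ∧ T.dist m2 v = T.dist m2 m1 + T.dist m1 v) := by
  classical
  by_cases hc : m2 ∈ (p.dropUntil m1 h1).support
  · left
    have hd : (p.dropUntil m1 h1).IsPath := hp.dropUntil h1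
    refine ⟨?_, T.dist_split hd hc⟩
    have hq : ((p.takeUntil m1 h1).append ((p.dropUntil m1 h1).takeUntil m2 hc)).IsPath := by
      apply Walk.IsPath.of_append_left (q := (p.dropUntil m1 h1).dropUntil m2 hc)
      rw [← Walk.append_assoc, Walk.take_spec _ hc, Walk.take_spec _ h1]
      exact hp
    have hm : m1 ∈ ((p.takeUntil m1 h1).append
        ((p.dropUntil m1 h1).takeUntil m2 hc)).support := by
      rw [Walk.mem_support_append_iff]
      exact Or.inl (Walk.end_mem_support _)
    exact T.dist_split hq hm
  · right
    have ht : m2 ∈ (p.takeUntil m1 h1).support := by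
      rw [← Walk.take_spec p h1, Walk.mem_support_append_iff] at h2
      tauto
    refine ⟨T.dist_split (hp.takeUntil h1) ht, ?_⟩
    have hq : (((p.takeUntil m1 h1).dropUntil m2 ht).append (p.dropUntil m1 h1)).IsPath := by
      apply Walk.IsPath.of_append_right (p := (p.takeUntil m1 h1).takeUntil m2 ht)
      rw [Walk.append_assoc, Walk.take_spec _ ht, Walk.take_spec _ h1]
      exact hp
    have hm : m1 ∈ (((p.takeUntil m1 h1).dropUntil m2 ht).append
        (p.dropUntil m1 h1)).support := by
      rw [Walk.mem_support_append_iff]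
      exact Or.inl (Walk.end_mem_support _)
    exact T.dist_split hq hm

end WTree

theorem pcg_subtree_max {α : Type} (T : WTree α) (u v w x : α)
    (hu : T.IsLeaf u) (hv : T.IsLeaf v) (hw : T.IsLeaf w) (hx : T.IsLeaf x)
    (huv : u ≠ v) (huw : u ≠ w) (hvw : v ≠ w)
    (hxu : x ≠ u) (hxv : x ≠ v) (hxw : x ≠ w)
    (hmax1 : T.dist u w ≤ T.dist u v) (hmax2 : T.dist v w ≤ T.dist u v) :
    T.dist w x ≤ max (T.dist u x) (T.dist v x) := by
  obtain ⟨p, hp⟩ := (T.isTree.existsUnique_path u v).exists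
  obtain ⟨m1, hm1, a1, a2, a3⟩ := T.median p hp w
  obtain ⟨m2, hm2, b1, b2, b3⟩ := T.median p hp x
  rw [a2, a1] at hmax1
  rw [a3, a1] at hmax2
  have hw1 : T.dist m1 w ≤ T.dist m1 v := by linarith
  have hw2 : T.dist m1 w ≤ T.dist u m1 := by
    have := T.dist_comm v m1
    linarith
  have tri : T.dist w x ≤ T.dist w m1 + T.dist m1 m2 + T.dist m2 x := by
    have t1 := T.dist_triangle w m1 x
    have t2 := T.dist_triangle m1 m2 x
    linarith
  have e1 := T.dist_comm w m1
  rcases T.between p hp hm1 hm2 with ⟨c1, c2⟩ | ⟨c1, c2⟩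
  · refine le_trans ?_ (le_max_left _ _)
    rw [b2, c1]
    linarith
  · refine le_trans ?_ (le_max_right _ _)
    rw [b3]
    have e2 := T.dist_comm v m2
    have e3 := T.dist_comm m2 m1
    linarith
end

section
/- Let C_n (n ≥ 4) be the cycle graph and suppose C_n = PCG(T, d_min, d_max). Then some pair of vertices at cycle-distance 2 (i.e., v_i and v_{i+2}, indices mod n) satisfies d_T(v_i, v_{i+2}) < d_min. -/
open SimpleGraph

/-!
If every pair at cycle distance two were at tree distance at least `dmin`, then, being
non-adjacent, it would be at distance more than `dmax`, while consecutive vertices are at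
distance at most `dmax`. Walk around the cycle as a sequence `x 0, x 1, …`. The four-point
condition of tree metrics, applied to `x i, x (i + 1), x (i + k), x (i + k + 1)`, shows by
induction on `k ≥ 2` that `x i` and `x (i + k)` stay more than `dmax` apart (and `x (i + 1)` is
strictly closer to `x (i + k)` than `x i` is). For `k = n - 1` this contradicts the edge from
`x (n - 1)` back to `x n = x 0`.
-/

theorem SimpleGraph.IsAcyclic.isPath_reverse_append_cons {V : Type*} {G : SimpleGraph V}
    (hG : G.IsAcyclic) {u x v c : V} (hadj : G.Adj u x) {p : G.Walk x v} {r : G.Walk u c}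
    (hp : (Walk.cons hadj p).IsPath) (hr : r.IsPath) (hx : x ∉ r.support) :
    (p.reverse.append (Walk.cons hadj.symm r)).IsPath := by
  classical
  obtain ⟨hp', hup⟩ := (Walk.cons_isPath_iff hadj p).mp hp
  -- a common vertex `y` would give two paths from `u` to `y`, only one of them through `x`
  have hdisj : ∀ y ∈ p.support, y ∉ r.support := by
    intro y hyp hyr
    have hpy : (Walk.cons hadj (p.takeUntil y hyp)).IsPath :=
      (hp'.takeUntil hyp).cons fun hu => hup (p.support_takeUntil_subset_support hyp hu)
    have heq := (hG.subsingleton_path u y).elim ⟨_, hpy⟩ ⟨_, hr.takeUntil hyr⟩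
    have hxy : x ∈ (Walk.cons hadj (p.takeUntil y hyp)).support := by simp
    rw [Subtype.mk.inj heq] at hxy
    exact hx (r.support_takeUntil_subset_support hyr hxy)
  rw [Walk.isPath_def, Walk.support_append, Walk.support_cons, List.tail_cons]
  exact hp'.reverse.support_nodup.append hr.support_nodup
    fun y hy1 hy2 => hdisj y (by simpa using hy1) hy2

namespace WTree

variable {α : Type} (T : WTree α)

noncomputable def walkWeight {u v : α} (p : T.g.Walk u v) : ℝ :=
  (p.darts.map fun d => T.w d.toProd.1 d.toProd.2).sum

lemma walkWeight_append {u v x : α} (p : T.g.Walk u v) (q : T.g.Walk v x) :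
    T.walkWeight (p.append q) = T.walkWeight p + T.walkWeight q := by
  simp [walkWeight, Walk.darts_append]

lemma walkWeight_reverse {u v : α} (p : T.g.Walk u v) :
    T.walkWeight p.reverse = T.walkWeight p := by
  simp only [walkWeight, Walk.darts_reverse, List.map_reverse, List.sum_reverse, List.map_map]
  congr 2
  funext d
  exact T.w_symm _ _

lemma walkWeight_nonneg {u v : α} (p : T.g.Walk u v) : 0 ≤ T.walkWeight p :=
  List.sum_nonneg fun _ hx => by
    obtain ⟨d, -, rfl⟩ := List.mem_map.1 hx
    exact (T.w_pos _ _ d.adj).le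

noncomputable def path (u v : α) : T.g.Walk u v :=
  (T.isTree.existsUnique_path u v).exists.choose

lemma isPath_path (u v : α) : (T.path u v).IsPath :=
  (T.isTree.existsUnique_path u v).exists.choose_spec

lemma dist_eq_walkWeight {u v : α} {p : T.g.Walk u v} (hp : p.IsPath) :
    T.dist u v = T.walkWeight p := by
  change T.walkWeight (T.path u v) = _
  rw [(T.isTree.existsUnique_path u v).unique (T.isPath_path u v) hp]

lemma dist_self (u : α) : T.dist u u = 0 :=
  T.dist_eq_walkWeight Walk.IsPath.nil

lemma dist_comm_s4 (u v : α) : T.dist u v = T.dist v u := by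
  rw [T.dist_eq_walkWeight (T.isPath_path u v), T.dist_eq_walkWeight (T.isPath_path u v).reverse,
    walkWeight_reverse]

lemma dist_nonneg (u v : α) : 0 ≤ T.dist u v :=
  T.walkWeight_nonneg _

lemma dist_eq_add_of_mem_support {u v m : α} {p : T.g.Walk u v} (hp : p.IsPath)
    (hm : m ∈ p.support) : T.dist u v = T.dist u m + T.dist m v := by
  classical
  rw [T.dist_eq_walkWeight hp, ← p.take_spec hm, walkWeight_append,
    T.dist_eq_walkWeight (hp.takeUntil hm), T.dist_eq_walkWeight (hp.dropUntil hm)]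

lemma exists_mem_support_dist_eq_add {u v : α} {p : T.g.Walk u v} (hp : p.IsPath)
    {c : α} {r : T.g.Walk u c} (hr : r.IsPath) :
    ∃ m ∈ p.support, m ∈ r.support ∧ T.dist v c = T.dist v m + T.dist m c := by
  classical
  induction p with
  | nil => exact ⟨_, Walk.start_mem_support _, r.start_mem_support, by rw [T.dist_self, zero_add]⟩
  | @cons u x v hadj p ih =>
    by_cases hx : x ∈ r.support
    · obtain ⟨m, hmp, hmr, hm⟩ := ih hp.of_cons (hr.dropUntil hx)
      exact ⟨m, List.mem_cons_of_mem _ hmp, r.support_dropUntil_subset_support hx hmr, hm⟩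
    · refine ⟨u, Walk.start_mem_support _, r.start_mem_support, ?_⟩
      exact T.dist_eq_add_of_mem_support (T.isTree.isAcyclic.isPath_reverse_append_cons hadj hp hr hx)
        (by simp)

lemma exists_median_mem_support {a b : α} {p : T.g.Walk a b} (hp : p.IsPath) (c : α) :
    ∃ m ∈ p.support, T.dist a b = T.dist a m + T.dist m b ∧
      T.dist a c = T.dist a m + T.dist m c ∧ T.dist b c = T.dist b m + T.dist m c := by
  obtain ⟨m, hmp, hmr, hm⟩ := T.exists_mem_support_dist_eq_add hp (T.isPath_path a c)
  exact ⟨m, hmp, T.dist_eq_add_of_mem_support hp hmp,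
    T.dist_eq_add_of_mem_support (T.isPath_path a c) hmr, hm⟩

lemma dist_triangle_s4 (u v w : α) : T.dist u v ≤ T.dist u w + T.dist w v := by
  obtain ⟨m, -, huv, huw, hvw⟩ := T.exists_median_mem_support (T.isPath_path u v) w
  linarith [T.dist_comm_s4 w v, T.dist_comm_s4 m v, T.dist_comm_s4 m w, T.dist_nonneg m w]

lemma dist_eq_add_or_dist_eq_add_of_mem_support {u v m m' : α} {p : T.g.Walk u v}
    (hp : p.IsPath) (hm : m ∈ p.support) (hm' : m' ∈ p.support) :
    T.dist u m = T.dist u m' + T.dist m' m ∨ T.dist m v = T.dist m m' + T.dist m' v := by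
  classical
  rw [← p.take_spec hm, Walk.mem_support_append_iff] at hm'
  exact hm'.imp (T.dist_eq_add_of_mem_support (hp.takeUntil hm))
    (T.dist_eq_add_of_mem_support (hp.dropUntil hm))

theorem dist_add_dist_le_max (a b c d : α) :
    T.dist a b + T.dist c d ≤ max (T.dist a c + T.dist b d) (T.dist a d + T.dist b c) := by
  -- the medians of `a b c` and of `a b d` both lie on the path from `a` to `b`
  obtain ⟨m, hm, -, hac, hbc⟩ := T.exists_median_mem_support (T.isPath_path a b) c
  obtain ⟨m', hm', hab, had, hbd⟩ := T.exists_median_mem_support (T.isPath_path a b) d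
  have := T.dist_triangle_s4 c d m
  have := T.dist_triangle_s4 m d m'
  have := T.dist_comm_s4 c m
  have := T.dist_comm_s4 m m'
  have := T.dist_comm_s4 b m'
  have := T.dist_comm_s4 b m
  rcases T.dist_eq_add_or_dist_eq_add_of_mem_support (T.isPath_path a b) hm hm' with h | h
  · exact le_max_of_le_left (by linarith)
  · exact le_max_of_le_right (by linarith)

theorem dist_add_dist_le_of_dist_le {a b c d : α} {M : ℝ} (hac : T.dist a c ≤ M)
    (hbd : T.dist b d ≤ M) (hfar : 2 * M < T.dist a b + T.dist c d) :
    T.dist a b + T.dist c d ≤ T.dist a d + T.dist b c := by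
  have := T.dist_add_dist_le_max a b c d
  rw [le_max_iff] at this
  exact this.resolve_left (by linarith)

section Sequence

variable {x : ℕ → α} {M : ℝ}

theorem lt_dist_of_steps_of_chords (hstep : ∀ i, T.dist (x i) (x (i + 1)) ≤ M)
    (hchord : ∀ i, M < T.dist (x i) (x (i + 2))) {k : ℕ} (hk : 2 ≤ k) (i : ℕ) :
    M < T.dist (x i) (x (i + k)) ∧ T.dist (x (i + 1)) (x (i + k)) < T.dist (x i) (x (i + k)) := by
  induction k, hk using Nat.le_induction generalizing i with
  | base => exact ⟨hchord i, (hstep (i + 1)).trans_lt (hchord i)⟩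
  | succ k hk ih =>
    obtain ⟨hfar, hcloser⟩ := ih i
    have hfar' : M < T.dist (x (i + 1)) (x (i + k + 1)) := by
      simpa only [Nat.add_right_comm] using (ih (i + 1)).1
    have key := T.dist_add_dist_le_of_dist_le (hstep i) (hstep (i + k)) (by linarith)
    rw [T.dist_comm_s4 (x (i + k)) (x (i + 1))] at key
    rw [← add_assoc]
    constructor <;> linarith

theorem ne_of_steps_of_chords (hstep : ∀ i, T.dist (x i) (x (i + 1)) ≤ M)
    (hchord : ∀ i, M < T.dist (x i) (x (i + 2))) {n : ℕ} (hn : 3 ≤ n) : x n ≠ x 0 := by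
  intro hreturn
  have hfar := (T.lt_dist_of_steps_of_chords hstep hchord (k := n - 1) (by omega) 0).1
  have hclose := hstep (n - 1)
  rw [Nat.sub_add_cancel (by omega), hreturn, dist_comm_s4] at hclose
  rw [zero_add] at hfar
  linarith

end Sequence

end WTree

section CycleGraph

open Fin.CommRing

variable {n : ℕ} [NeZero n]

lemma cycleGraph_adj_natCast_succ (hn : 2 ≤ n) (i : ℕ) :
    (cycleGraph n).Adj (i : Fin n) ((i + 1 : ℕ) : Fin n) := by
  rw [cycleGraph_adj', Nat.cast_succ, add_sub_cancel_left, Fin.val_one', Nat.mod_eq_of_lt hn]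
  simp

lemma natCast_ne_natCast_add_two (hn : 3 ≤ n) (i : ℕ) :
    (i : Fin n) ≠ ((i + 2 : ℕ) : Fin n) := by
  rw [Nat.cast_add, ne_eq, left_eq_add, Fin.ext_iff, Fin.val_natCast, Fin.val_zero,
    Nat.mod_eq_of_lt hn]
  omega

lemma not_cycleGraph_adj_natCast_add_two (hn : 4 ≤ n) (i : ℕ) :
    ¬(cycleGraph n).Adj (i : Fin n) ((i + 2 : ℕ) : Fin n) := by
  have h2 : ((2 : ℕ) : Fin n).val = 2 := by rw [Fin.val_natCast, Nat.mod_eq_of_lt (by omega)]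
  rw [cycleGraph_adj', Nat.cast_add, sub_add_cancel_left, add_sub_cancel_left, Fin.val_neg]
  simp only [Fin.ext_iff, h2, Fin.val_zero, OfNat.ofNat_ne_zero, if_false]
  omega

end CycleGraph

open Fin.CommRing in
theorem cycle_red_two_non_edge_general {β : Type} (n : ℕ) (hn : 4 ≤ n)
    (T : WTree β) (f : Fin n → β) (dmin dmax : ℝ)
    (hpcg : IsPCGWith (SimpleGraph.cycleGraph n) T f dmin dmax) :
    ∃ i j : Fin n, (i.val + 2) % n = j.val ∧ T.dist (f i) (f j) < dmin := by
  by_contra! hchord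
  have : NeZero n := ⟨by omega⟩
  obtain ⟨-, -, -, hiff⟩ := hpcg
  refine T.ne_of_steps_of_chords (x := fun i : ℕ => f i) (M := dmax) (fun i => ?_) (fun i => ?_)
    (by omega : 3 ≤ n) (by simp)
  · have hadj := cycleGraph_adj_natCast_succ (n := n) (by omega) i
    exact ((hiff _ _ hadj.ne).1 hadj).2
  · refine lt_of_not_ge fun hle => not_cycleGraph_adj_natCast_add_two hn i ?_
    refine (hiff _ _ (natCast_ne_natCast_add_two (by omega) i)).2 ⟨hchord _ _ ?_, hle⟩
    rw [Fin.val_natCast, Fin.val_natCast, Nat.mod_add_mod]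

theorem cycle_red_two_non_edge {β : Type} (n : ℕ) (hn : 4 ≤ n)
    (T : WTree β) (f : Fin n → β) (dmin dmax : ℝ)
    (h0 : 0 ≤ dmin) (h1 : dmin ≤ dmax)
    (hpcg : IsPCGWith (SimpleGraph.cycleGraph n) T f dmin dmax) :
    ∃ i j : Fin n, (i.val + 2) % n = j.val ∧ T.dist (f i) (f j) < dmin :=
  cycle_red_two_non_edge_general n hn T f dmin dmax hpcg
end
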